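/- arXiv:1111.0228 — 2 statements merged into one kernel-verified Lean document; each statement's English description precedes it below -/
import Mathlib

section
/- Any binary self-dual code C of length n with minimum weight d > 2 is, up to permutation equivalence, obtained from some binary self-dual code C₀ of length n−2 by the building-up construction: there exists an odd-weight vector x ∈ GF(2)^{n−2} and a generator matrix with rows r₁,…,r_{(n−2)/2} of C₀ such that C is generated by (1,0,x) and the vectors (yᵢ, yᵢ, rᵢ) where yᵢ = x·rᵢ. -/
open Finset

/-- Hamming weight of a binary vector. -/
def wt {n : ℕ} (v : Fin n → ZMod 2) : ℕ := (Finset.univ.filter (fun i => v i ≠ 0)).card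

/-- Standard inner product over GF(2). -/
def inn {n : ℕ} (u v : Fin n → ZMod 2) : ZMod 2 := ∑ i, u i * v i

/-- A code is self-dual if it equals its dual. -/
def IsSelfDual {n : ℕ} (C : Submodule (ZMod 2) (Fin n → ZMod 2)) : Prop :=
  ∀ v, v ∈ C ↔ ∀ c ∈ C, inn v c = 0

/-- `C` has minimum distance (weight) `d`. -/
def HasMinDist {n : ℕ} (C : Submodule (ZMod 2) (Fin n → ZMod 2)) (d : ℕ) : Prop :=
  (∃ c ∈ C, c ≠ 0 ∧ wt c = d) ∧ ∀ c ∈ C, c ≠ 0 → d ≤ wt c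

/-- The shadow `S = C₀^⊥ \ C`, where `C₀` is the doubly-even subcode of `C`. -/
def shadow {n : ℕ} (C : Submodule (ZMod 2) (Fin n → ZMod 2)) : Set (Fin n → ZMod 2) :=
  {v | ∀ c ∈ C, wt c % 4 = 0 → inn v c = 0} \ (C : Set (Fin n → ZMod 2))

/-- Covering radius of a code. -/
noncomputable def coveringRadius {n : ℕ} (C : Submodule (ZMod 2) (Fin n → ZMod 2)) : ℕ :=
  sInf {R | ∀ v : Fin n → ZMod 2, ∃ c ∈ C, wt (v - c) ≤ R}

/-- Prepend two coordinates to a vector. -/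
def vcons2 {k : ℕ} (a b : ZMod 2) (v : Fin k → ZMod 2) : Fin (k + 2) → ZMod 2 :=
  Fin.cons a (Fin.cons b v)

/-!
Since `C = C^⊥` has no word of weight 2, `e₀ + e₁ ∉ C^⊥`, so some codeword differs on the
first two coordinates; after possibly swapping them it is `z = (1, 0, x)`, and `z · z = 0`
makes the weight of `x` odd. Let `C₀` be the preimage of `C` under the lift
`v ↦ (x·v, x·v, v)`. Adding `(c₀ + c₁) z` to any `c ∈ C` gives a codeword orthogonal to `z`
with equal first coordinates, i.e. a lift; hence `C = ⟨z⟩ + lift C₀`. The lift preserves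
inner products and is orthogonal to `z`, so `C₀` is self-dual, of dimension `m`, and
therefore spanned by `m` vectors.
-/

open Matrix Module Submodule

lemma inn_eq_dotProduct {n : ℕ} (u v : Fin n → ZMod 2) : inn u v = u ⬝ᵥ v := rfl

lemma inn_comm {n : ℕ} (u v : Fin n → ZMod 2) : inn u v = inn v u := dotProduct_comm u v

lemma inn_self {n : ℕ} (v : Fin n → ZMod 2) : inn v v = wt v := by
  rw [wt, Finset.natCast_card_filter]
  refine Finset.sum_congr rfl fun i _ => ?_
  generalize v i = a
  revert a
  decide

lemma inn_single_add_single {n : ℕ} (i j : Fin n) (v : Fin n → ZMod 2) :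
    inn (Pi.single i 1 + Pi.single j 1) v = v i + v j := by
  simp [inn_eq_dotProduct, add_dotProduct, single_dotProduct]

lemma wt_single_add_single_le_two {n : ℕ} (i j : Fin n) :
    wt (Pi.single i 1 + Pi.single j 1 : Fin n → ZMod 2) ≤ 2 := by
  refine (Finset.card_le_card (t := {i, j}) fun l hl => ?_).trans Finset.card_le_two
  contrapose! hl
  simp_all [Pi.single_apply]

lemma inn_comp_perm {n : ℕ} (u v : Fin n → ZMod 2) (σ : Equiv.Perm (Fin n)) :
    inn (u ∘ σ) (v ∘ σ) = inn u v :=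
  Equiv.sum_comp σ fun i => u i * v i

lemma vcons2_eq_vecCons {k : ℕ} (a b : ZMod 2) (v : Fin k → ZMod 2) :
    vcons2 a b v = vecCons a (vecCons b v) := rfl

lemma vcons2_eta {k : ℕ} (c : Fin (k + 2) → ZMod 2) :
    vcons2 (c 0) (c 1) (Fin.tail (Fin.tail c)) = c := by
  ext i
  refine Fin.cases ?_ (fun j => Fin.cases ?_ (fun l => ?_) j) i <;> simp [vcons2, Fin.tail]

lemma inn_vcons2 {k : ℕ} (a b a' b' : ZMod 2) (u v : Fin k → ZMod 2) :
    inn (vcons2 a b u) (vcons2 a' b' v) = a * a' + b * b' + inn u v := by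
  simp [inn_eq_dotProduct, vcons2_eq_vecCons, add_assoc]

lemma Submodule.exists_fin_span_range_eq_of_le {R M : Type*} [Semiring R] [AddCommMonoid M]
    [Module R M] {a m : ℕ} (f : Fin a → M) (h : a ≤ m) :
    ∃ g : Fin m → M, span R (Set.range g) = span R (Set.range f) := by
  refine ⟨fun i => if hi : (i : ℕ) < a then f ⟨i, hi⟩ else 0, le_antisymm ?_ ?_⟩
  · rw [span_le]
    rintro _ ⟨i, rfl⟩
    dsimp only
    split_ifs
    exacts [subset_span ⟨_, rfl⟩, zero_mem _]
  · refine span_mono ?_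
    rintro _ ⟨j, rfl⟩
    exact ⟨Fin.castLE h j, by simp⟩

lemma Submodule.exists_fin_span_range_eq_of_finrank_le {K V : Type*} [DivisionRing K]
    [AddCommGroup V] [Module K V] [FiniteDimensional K V] (W : Submodule K V) {m : ℕ}
    (h : finrank K W ≤ m) : ∃ r : Fin m → V, span K (Set.range r) = W := by
  obtain ⟨f, -, hf, -⟩ := exists_fun_fin_finrank_span_eq K (W : Set V)
  obtain ⟨r, hr⟩ := exists_fin_span_range_eq_of_le (R := K) (m := m) f (by rwa [span_eq])
  exact ⟨r, hr.trans (hf.trans (span_eq W))⟩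

namespace IsSelfDual

variable {n : ℕ} {C : Submodule (ZMod 2) (Fin n → ZMod 2)}

lemma inn_eq_zero (h : IsSelfDual C) {u v : Fin n → ZMod 2} (hu : u ∈ C) (hv : v ∈ C) :
    inn u v = 0 :=
  (h u).1 hu v hv

lemma orthogonal_eq (h : IsSelfDual C) :
    (toBilin' (1 : Matrix (Fin n) (Fin n) (ZMod 2))).orthogonal C = C := by
  ext v
  simp [LinearMap.BilinForm.mem_orthogonal_iff, toBilin'_apply', h v, inn_eq_dotProduct,
    dotProduct_comm]

lemma two_mul_finrank (h : IsSelfDual C) : 2 * finrank (ZMod 2) C = n := by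
  have hnd := LinearMap.BilinForm.nondegenerate_toBilin'_of_det_ne_zero'
    (1 : Matrix (Fin n) (Fin n) (ZMod 2)) (by simp)
  have horth := LinearMap.BilinForm.finrank_orthogonal hnd C
  have hle := C.finrank_le
  rw [h.orthogonal_eq, finrank_fin_fun] at horth
  rw [finrank_fin_fun] at hle
  omega

lemma map_funLeft (h : IsSelfDual C) (σ : Equiv.Perm (Fin n)) :
    IsSelfDual (C.map (LinearMap.funLeft (ZMod 2) (ZMod 2) σ)) := by
  have hmem : ∀ w, w ∈ C.map (LinearMap.funLeft (ZMod 2) (ZMod 2) σ) ↔ w ∘ σ.symm ∈ C :=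
    fun w => Submodule.mem_map_equiv C (e := LinearEquiv.funCongrLeft (ZMod 2) (ZMod 2) σ)
  intro v
  simp only [hmem]
  rw [h]
  constructor
  · intro hv c hc
    simpa [← inn_comp_perm v c σ.symm] using hv _ hc
  · intro hv c hc
    rw [← inn_comp_perm _ _ σ]
    simpa [Function.comp_assoc] using hv (c ∘ σ) (by simpa [Function.comp_assoc] using hc)

lemma exists_mem_add_ne_zero (h : IsSelfDual C) (hmin : ∀ c ∈ C, c ≠ 0 → 3 ≤ wt c)
    {i j : Fin n} (hij : i ≠ j) : ∃ c ∈ C, c i + c j ≠ 0 := by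
  have hnot : (Pi.single i 1 + Pi.single j 1 : Fin n → ZMod 2) ∉ C := fun hmem => by
    have hne : (Pi.single i 1 + Pi.single j 1 : Fin n → ZMod 2) ≠ 0 := fun h0 => by
      simpa [hij] using congrFun h0 i
    have := hmin _ hmem hne
    have := wt_single_add_single_le_two i j
    omega
  rw [h] at hnot
  push Not at hnot
  simpa [inn_single_add_single] using hnot

lemma exists_vcons2_one_zero_mem_map {k : ℕ} {C : Submodule (ZMod 2) (Fin (k + 2) → ZMod 2)}
    (h : IsSelfDual C) (hmin : ∀ c ∈ C, c ≠ 0 → 3 ≤ wt c) :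
    ∃ σ : Equiv.Perm (Fin (k + 2)), ∃ x,
      vcons2 1 0 x ∈ C.map (LinearMap.funLeft (ZMod 2) (ZMod 2) σ) := by
  obtain ⟨c, hc, h01⟩ := h.exists_mem_add_ne_zero hmin (i := 0) (j := 1) (by simp)
  obtain ⟨σ, h0, h1⟩ : ∃ σ : Equiv.Perm (Fin (k + 2)), c (σ 0) = 1 ∧ c (σ 1) = 0 := by
    have : (c 0 = 1 ∧ c 1 = 0) ∨ (c 1 = 1 ∧ c 0 = 0) := by
      generalize c 0 = a, c 1 = b at h01
      revert a b
      decide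
    rcases this with h | h
    · exact ⟨1, h⟩
    · exact ⟨Equiv.swap 0 1, by simpa using h⟩
  have hη := vcons2_eta (c ∘ σ)
  rw [Function.comp_apply, Function.comp_apply, h0, h1] at hη
  refine ⟨σ, Fin.tail (Fin.tail (c ∘ σ)), ?_⟩
  rw [hη]
  exact mem_map_of_mem hc

end IsSelfDual

section BuildingUp

variable {k : ℕ} (x : Fin k → ZMod 2)

def buildUpLift : (Fin k → ZMod 2) →ₗ[ZMod 2] Fin (k + 2) → ZMod 2 where
  toFun v := vcons2 (inn x v) (inn x v) v
  map_add' u v := by simp [vcons2_eq_vecCons, inn_eq_dotProduct, dotProduct_add]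
  map_smul' a v := by simp [vcons2_eq_vecCons, inn_eq_dotProduct, dotProduct_smul]

lemma buildUpLift_apply (v : Fin k → ZMod 2) :
    buildUpLift x v = vcons2 (inn x v) (inn x v) v := rfl

lemma inn_buildUpLift (u v : Fin k → ZMod 2) :
    inn (buildUpLift x u) (buildUpLift x v) = inn u v := by
  rw [buildUpLift_apply, buildUpLift_apply, inn_vcons2, CharTwo.add_self_eq_zero, zero_add]

lemma inn_buildUpLift_vcons2_one_zero (v : Fin k → ZMod 2) :
    inn (buildUpLift x v) (vcons2 1 0 x) = 0 := by
  rw [buildUpLift_apply, inn_vcons2, inn_comm v]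
  simp [CharTwo.add_self_eq_zero]

lemma eq_buildUpLift_of_inn_eq_zero {c : Fin (k + 2) → ZMod 2} (hc : inn c (vcons2 1 0 x) = 0)
    (h01 : c 0 = c 1) : c = buildUpLift x (Fin.tail (Fin.tail c)) := by
  have h0 : c 0 = inn x (Fin.tail (Fin.tail c)) := by
    rw [← vcons2_eta c, inn_vcons2] at hc
    simpa [inn_comm x, CharTwo.add_eq_zero] using hc
  conv_lhs => rw [← vcons2_eta c]
  rw [buildUpLift_apply, ← h0, ← h01]

namespace IsSelfDual

variable {D : Submodule (ZMod 2) (Fin (k + 2) → ZMod 2)} {x}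

lemma le_sup_map_buildUpLift (hD : IsSelfDual D) (hz : vcons2 1 0 x ∈ D) :
    D ≤ (ZMod 2 ∙ vcons2 1 0 x) ⊔ (D.comap (buildUpLift x)).map (buildUpLift x) := by
  intro c hc
  -- adding `s • vcons2 1 0 x` makes the first two coordinates equal
  set s := c 0 + c 1
  have hc' : c + s • vcons2 1 0 x ∈ D := add_mem hc (smul_mem _ s hz)
  have hlift := eq_buildUpLift_of_inn_eq_zero x (hD.inn_eq_zero hc' hz)
    (by simp [s, vcons2, CharTwo.add_cancel_left])
  rw [← add_sub_cancel_right c (s • vcons2 1 0 x)]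
  refine sub_mem (mem_sup_right ⟨_, ?_, hlift.symm⟩)
    (mem_sup_left (smul_mem _ s (mem_span_singleton_self _)))
  rw [SetLike.mem_coe, mem_comap, ← hlift]
  exact hc'

lemma eq_sup_map_buildUpLift (hD : IsSelfDual D) (hz : vcons2 1 0 x ∈ D) :
    D = (ZMod 2 ∙ vcons2 1 0 x) ⊔ (D.comap (buildUpLift x)).map (buildUpLift x) :=
  le_antisymm (hD.le_sup_map_buildUpLift hz)
    (sup_le ((span_singleton_le_iff_mem _ _).2 hz) (map_comap_le _ _))

lemma comap_buildUpLift (hD : IsSelfDual D) (hz : vcons2 1 0 x ∈ D) :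
    IsSelfDual (D.comap (buildUpLift x)) := by
  intro v
  refine ⟨fun hv w hw => inn_buildUpLift x v w ▸ hD.inn_eq_zero hv hw, fun hv => ?_⟩
  rw [mem_comap, hD]
  intro c hc
  obtain ⟨y, hy, l, ⟨t, ht, rfl⟩, rfl⟩ := mem_sup.1 (hD.le_sup_map_buildUpLift hz hc)
  obtain ⟨a, rfl⟩ := mem_span_singleton.1 hy
  calc inn (buildUpLift x v) (a • vcons2 1 0 x + buildUpLift x t)
      = a * inn (buildUpLift x v) (vcons2 1 0 x) + inn (buildUpLift x v) (buildUpLift x t) := by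
        simp only [inn_eq_dotProduct, dotProduct_add, dotProduct_smul, smul_eq_mul]
    _ = 0 := by
        rw [inn_buildUpLift_vcons2_one_zero, inn_buildUpLift, hv t ht, mul_zero, add_zero]

lemma wt_mod_two_of_vcons2_one_zero_mem (hD : IsSelfDual D) (hz : vcons2 1 0 x ∈ D) :
    wt x % 2 = 1 := by
  have h := hD.inn_eq_zero hz hz
  rw [inn_vcons2, inn_self, mul_one, mul_zero, add_zero, CharTwo.add_eq_zero] at h
  rw [← ZMod.val_natCast, ← h]
  rfl

end IsSelfDual

end BuildingUp

theorem stmt_6 (m : ℕ)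
    (C : Submodule (ZMod 2) (Fin (2*m+2) → ZMod 2))
    (hsd : IsSelfDual C) (hmin : ∀ c ∈ C, c ≠ 0 → 3 ≤ wt c) :
    ∃ C0 : Submodule (ZMod 2) (Fin (2*m) → ZMod 2), IsSelfDual C0 ∧
    ∃ r : Fin m → Fin (2*m) → ZMod 2, Submodule.span (ZMod 2) (Set.range r) = C0 ∧
    ∃ x : Fin (2*m) → ZMod 2, wt x % 2 = 1 ∧
    ∃ σ : Equiv.Perm (Fin (2*m+2)),
      (fun (c : Fin (2*m+2) → ZMod 2) => c ∘ σ) '' (C : Set (Fin (2*m+2) → ZMod 2)) =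
        ↑(Submodule.span (ZMod 2)
          (insert (vcons2 1 0 x)
            (Set.range fun i => vcons2 (inn x (r i)) (inn x (r i)) (r i)))) := by
  obtain ⟨σ, x, hz⟩ := hsd.exists_vcons2_one_zero_mem_map hmin
  have hD := hsd.map_funLeft σ
  have hC0 := hD.comap_buildUpLift hz
  obtain ⟨r, hr⟩ := exists_fin_span_range_eq_of_finrank_le _
    (Nat.le_of_mul_le_mul_left hC0.two_mul_finrank.le two_pos)
  refine ⟨_, hC0, r, hr, x, hD.wt_mod_two_of_vcons2_one_zero_mem hz, σ, ?_⟩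
  have hrange : (Set.range fun i => vcons2 (inn x (r i)) (inn x (r i)) (r i)) =
      buildUpLift x '' Set.range r :=
    Set.range_comp (buildUpLift x) r
  rw [hrange, span_insert, span_image, hr, ← hD.eq_sup_map_buildUpLift hz, map_coe]
  rfl
end

section
/- Let C be a binary self-dual code of length n whose nonzero codewords take exactly s distinct weights. Then the covering radius of C is at most s (Delsarte's bound for self-dual codes). -/
open Finset

noncomputable def chi (a : ZMod 2) : ℚ := if a = 0 then 1 else -1

lemma chi_add (a b : ZMod 2) : chi (a + b) = chi a * chi b := by
  have h : ∀ x : ZMod 2, x = 0 ∨ x = 1 := by decide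
  rcases h a with rfl | rfl <;> rcases h b with rfl | rfl <;> norm_num [chi] <;> decide

lemma chi_zero : chi 0 = 1 := by norm_num [chi]

lemma chi_add_one (a : ZMod 2) : chi (a + 1) = - chi a := by
  have h : ∀ x : ZMod 2, x = 0 ∨ x = 1 := by decide
  rcases h a with rfl | rfl <;> norm_num [chi] <;> decide

lemma inn_add_left {n : ℕ} (u v w : Fin n → ZMod 2) : inn (u + v) w = inn u w + inn v w := by
  simp [inn, add_mul, Finset.sum_add_distrib]

lemma inn_sub_right {n : ℕ} (x u v : Fin n → ZMod 2) : inn x (u - v) = inn x u + inn x v := by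
  have h : ∀ a b : ZMod 2, a - b = a + b := by decide
  simp [inn, Pi.sub_apply, h, mul_add, Finset.sum_add_distrib]

lemma inn_add_right {n : ℕ} (x u v : Fin n → ZMod 2) : inn x (u + v) = inn x u + inn x v := by
  simp [inn, mul_add, Finset.sum_add_distrib]

lemma kill {n : ℕ} (y : Fin n → ZMod 2) (T : Finset (Fin n)) (i0 : Fin n)
    (hi0 : i0 ∉ T) (hy : y i0 = 1) :
    ∑ u ∈ Finset.univ.filter (fun u : Fin n → ZMod 2 => ∀ i ∈ T, u i = 1),
      chi (inn u y) = 0 := by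
  classical
  set e : Fin n → ZMod 2 := Pi.single i0 1 with he
  have hinne : inn e y = 1 := by
    rw [inn]
    rw [Finset.sum_eq_single i0]
    · simp [he, hy]
    · intro b _ hb; simp [he, Pi.single_eq_of_ne hb]
    · simp
  refine Finset.sum_involution (fun u _ => u + e) ?_ ?_ ?_ ?_
  · intro u _
    rw [inn_add_left, hinne, chi_add_one]
    ring
  · intro u _ _
    intro hcontra
    have := congrFun hcontra i0
    simp [he] at this
  · intro u hu
    simp only [Finset.mem_filter, Finset.mem_univ, true_and] at hu ⊢
    intro i hi
    have hne : i ≠ i0 := fun h => hi0 (h ▸ hi)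
    simp [he, Pi.single_eq_of_ne hne, hu i hi]
  · intro u _
    funext i
    have h2 : ∀ a b : ZMod 2, a + b + b = a := by decide
    simp [Pi.add_apply, h2]

lemma pow_count {n : ℕ} (u : Fin n → ZMod 2) (d : ℕ) :
    ((wt u : ℚ)) ^ d = ∑ f : Fin d → Fin n, (if ∀ i, u (f i) = 1 then (1 : ℚ) else 0) := by
  classical
  rw [Finset.sum_boole]
  have hset : Finset.univ.filter (fun f : Fin d → Fin n => ∀ i, u (f i) = 1)
      = Fintype.piFinset (fun _ : Fin d => Finset.univ.filter (fun j => u j = 1)) := by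
    ext f
    simp [Fintype.mem_piFinset]
  rw [hset, Fintype.card_piFinset]
  have hwt : wt u = (Finset.univ.filter (fun j => u j = 1)).card := by
    unfold wt
    congr 1
    ext j
    have : ∀ a : ZMod 2, a ≠ 0 ↔ a = 1 := by decide
    simp [this]
  rw [hwt]
  push_cast
  rw [Finset.prod_const, Finset.card_univ, Fintype.card_fin]

lemma kill_pow {n : ℕ} (y : Fin n → ZMod 2) (s d : ℕ) (hd : d ≤ s) (hy : s < wt y) :
    ∑ u : Fin n → ZMod 2, ((wt u : ℚ)) ^ d * chi (inn u y) = 0 := by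
  classical
  have : ∑ u : Fin n → ZMod 2, ((wt u : ℚ)) ^ d * chi (inn u y)
      = ∑ f : Fin d → Fin n, ∑ u : Fin n → ZMod 2,
          (if ∀ i, u (f i) = 1 then (1 : ℚ) else 0) * chi (inn u y) := by
    rw [Finset.sum_comm]
    exact Finset.sum_congr rfl fun u _ => by rw [pow_count, Finset.sum_mul]
  rw [this]
  apply Finset.sum_eq_zero
  intro f _
  -- rewrite as a sum over the filtered set
  have hT : ∀ u : Fin n → ZMod 2, (∀ i, u (f i) = 1) ↔ ∀ j ∈ Finset.univ.image f, u j = 1 := by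
    intro u
    constructor
    · intro h j hj
      obtain ⟨i, _, rfl⟩ := Finset.mem_image.mp hj
      exact h i
    · intro h i
      exact h (f i) (Finset.mem_image_of_mem f (Finset.mem_univ i))
  have hrw : ∑ u : Fin n → ZMod 2, (if ∀ i, u (f i) = 1 then (1 : ℚ) else 0) * chi (inn u y)
      = ∑ u ∈ Finset.univ.filter (fun u : Fin n → ZMod 2 => ∀ j ∈ Finset.univ.image f, u j = 1),
          chi (inn u y) := by
    rw [Finset.sum_filter]
    apply Finset.sum_congr rfl
    intro u _
    by_cases h : ∀ i, u (f i) = 1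
    · rw [if_pos h, if_pos ((hT u).mp h), one_mul]
    · rw [if_neg h, if_neg (fun hh => h ((hT u).mpr hh)), zero_mul]
  rw [hrw]
  -- find a coordinate of y outside the image
  have hcard : (Finset.univ.image f).card ≤ d := le_trans (Finset.card_image_le)
    (by simp)
  have hnotsub : ¬ (Finset.univ.filter (fun i => y i ≠ 0) ⊆ Finset.univ.image f) := by
    intro hsub
    have := Finset.card_le_card hsub
    unfold wt at hy
    omega
  obtain ⟨i0, hi0mem, hi0not⟩ := Finset.not_subset.mp hnotsub
  have hyi0 : y i0 = 1 := by
    have h1 : y i0 ≠ 0 := (Finset.mem_filter.mp hi0mem).2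
    have : ∀ a : ZMod 2, a ≠ 0 → a = 1 := by decide
    exact this _ h1
  exact kill y (Finset.univ.image f) i0 hi0not hyi0

lemma kill_poly {n : ℕ} (y : Fin n → ZMod 2) (s : ℕ) (W : Finset ℕ) (hW : W.card ≤ s)
    (hy : s < wt y) :
    ∑ u : Fin n → ZMod 2, (∏ w ∈ W, ((w : ℚ) - (wt u : ℚ))) * chi (inn u y) = 0 := by
  classical
  have hexp : ∀ u : Fin n → ZMod 2,
      (∏ w ∈ W, ((w : ℚ) - (wt u : ℚ)))
        = ∑ t ∈ W.powerset, (∏ w ∈ t, (w : ℚ)) * ((-1 : ℚ) ^ (W \ t).card * (wt u : ℚ) ^ (W \ t).card) := by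
    intro u
    have h1 : ∀ w : ℕ, ((w : ℚ) - (wt u : ℚ)) = (w : ℚ) + (-(wt u : ℚ)) := by intro w; ring
    simp_rw [h1]
    rw [Finset.prod_add]
    apply Finset.sum_congr rfl
    intro t _
    rw [Finset.prod_const, neg_pow]
  calc ∑ u : Fin n → ZMod 2, (∏ w ∈ W, ((w : ℚ) - (wt u : ℚ))) * chi (inn u y)
      = ∑ u : Fin n → ZMod 2, ∑ t ∈ W.powerset,
          (∏ w ∈ t, (w : ℚ)) * (-1 : ℚ) ^ (W \ t).card * ((wt u : ℚ) ^ (W \ t).card * chi (inn u y)) := by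
        apply Finset.sum_congr rfl
        intro u _
        rw [hexp u, Finset.sum_mul]
        apply Finset.sum_congr rfl
        intro t _
        ring
    _ = ∑ t ∈ W.powerset, (∏ w ∈ t, (w : ℚ)) * (-1 : ℚ) ^ (W \ t).card *
          (∑ u : Fin n → ZMod 2, (wt u : ℚ) ^ (W \ t).card * chi (inn u y)) := by
        rw [Finset.sum_comm]
        apply Finset.sum_congr rfl
        intro t _
        rw [Finset.mul_sum]
    _ = 0 := by
        apply Finset.sum_eq_zero
        intro t _
        rw [kill_pow y s _ (le_trans (le_trans (Finset.card_le_card (Finset.sdiff_subset)) hW) le_rfl) hy,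
          mul_zero]

lemma code_sum {n : ℕ} (C : Submodule (ZMod 2) (Fin n → ZMod 2)) (hsd : IsSelfDual C)
    (CF : Finset (Fin n → ZMod 2)) (hCF : ∀ x, x ∈ CF ↔ x ∈ C) (x : Fin n → ZMod 2) :
    ∑ c ∈ CF, chi (inn x c) = if x ∈ CF then (CF.card : ℚ) else 0 := by
  classical
  by_cases hx : x ∈ CF
  · rw [if_pos hx]
    have hx' : x ∈ C := (hCF x).mp hx
    have h0 : ∀ c ∈ CF, chi (inn x c) = 1 := by
      intro c hc
      rw [(hsd x).mp hx' c ((hCF c).mp hc), chi_zero]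
    rw [Finset.sum_congr rfl h0, Finset.sum_const, nsmul_eq_mul, mul_one]
  · rw [if_neg hx]
    have hx' : x ∉ C := fun h => hx ((hCF x).mpr h)
    have hex : ∃ c0 ∈ C, inn x c0 ≠ 0 := by
      by_contra hcon
      push_neg at hcon
      exact hx' ((hsd x).mpr hcon)
    obtain ⟨c0, hc0C, hc0⟩ := hex
    have hc0' : inn x c0 = 1 := by
      have : ∀ a : ZMod 2, a ≠ 0 → a = 1 := by decide
      exact this _ hc0
    refine Finset.sum_involution (fun c _ => c + c0) ?_ ?_ ?_ ?_
    · intro c _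
      rw [inn_add_right, hc0', chi_add_one]
      ring
    · intro c _ _ hcontra
      have h1 : c + c0 = c := hcontra
      have : c0 = 0 := by
        have := congrArg (fun z => z - c) h1
        simpa [add_sub_cancel_left] using this
      rw [this] at hc0
      simp [inn] at hc0
    · intro c hc
      rw [hCF] at hc ⊢
      exact C.add_mem hc hc0C
    · intro c _
      funext i
      have h2 : ∀ a b : ZMod 2, a + b + b = a := by decide
      simp [Pi.add_apply, h2]

lemma wt_eq_zero_iff {n : ℕ} (c : Fin n → ZMod 2) : wt c = 0 ↔ c = 0 := by
  constructor
  · intro h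
    funext i
    by_contra hi
    have : i ∈ Finset.univ.filter (fun i => c i ≠ 0) := by
      simp only [Finset.mem_filter, Finset.mem_univ, true_and]
      exact fun hh => hi hh
    rw [wt, Finset.card_eq_zero] at h
    rw [h] at this
    exact absurd this (Finset.notMem_empty i)
  · intro h; subst h; simp [wt]

theorem stmt_19 (n s : ℕ) (C : Submodule (ZMod 2) (Fin n → ZMod 2)) (hsd : IsSelfDual C)
    (hw : {w : ℕ | ∃ c ∈ C, c ≠ 0 ∧ wt c = w}.ncard = s) :
    coveringRadius C ≤ s := by
  classical
  have key : ∀ v : Fin n → ZMod 2, ∃ c ∈ C, wt (v - c) ≤ s := by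
    intro v
    by_contra hcon
    push_neg at hcon
    have hCfin : (C : Set (Fin n → ZMod 2)).Finite := Set.toFinite _
    set CF := hCfin.toFinset with hCFdef
    have hCF : ∀ x, x ∈ CF ↔ x ∈ C := fun x => hCfin.mem_toFinset
    have hWfin : {w : ℕ | ∃ c ∈ C, c ≠ 0 ∧ wt c = w}.Finite := by
      apply Set.Finite.subset (Set.finite_Iic n)
      rintro w ⟨c, _, _, rfl⟩
      refine Set.mem_Iic.mpr (le_trans (Finset.card_le_card (Finset.filter_subset _ _)) ?_)
      simp
    set W := hWfin.toFinset with hWdef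
    have hWcard : W.card = s := by
      rw [← hw, Set.ncard_eq_toFinset_card _ hWfin]
    have hWmem : ∀ w, w ∈ W ↔ ∃ c ∈ C, c ≠ 0 ∧ wt c = w := fun w => by
      simp only [hWdef, Set.Finite.mem_toFinset, Set.mem_setOf_eq]
    have way2 : ∑ x : Fin n → ZMod 2, ∑ c ∈ CF,
        (∏ w ∈ W, ((w : ℚ) - (wt x : ℚ))) * chi (inn x (v - c)) = 0 := by
      rw [Finset.sum_comm]
      apply Finset.sum_eq_zero
      intro c hc
      exact kill_poly (v - c) s W (le_of_eq hWcard) (hcon c ((hCF c).mp hc))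
    have way1 : ∑ x : Fin n → ZMod 2, ∑ c ∈ CF,
        (∏ w ∈ W, ((w : ℚ) - (wt x : ℚ))) * chi (inn x (v - c))
        = (CF.card : ℚ) * ∏ w ∈ W, (w : ℚ) := by
      have hstep : ∀ x : Fin n → ZMod 2, ∑ c ∈ CF,
          (∏ w ∈ W, ((w : ℚ) - (wt x : ℚ))) * chi (inn x (v - c))
          = (∏ w ∈ W, ((w : ℚ) - (wt x : ℚ))) * chi (inn x v)
              * (if x ∈ CF then (CF.card : ℚ) else 0) := by
        intro x
        rw [← code_sum C hsd CF hCF x, Finset.mul_sum]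
        apply Finset.sum_congr rfl
        intro c _
        rw [inn_sub_right, chi_add]
        ring
      rw [Finset.sum_congr rfl (fun x _ => hstep x)]
      simp_rw [mul_ite, mul_zero]
      rw [Finset.sum_ite_mem, Finset.univ_inter]
      rw [Finset.sum_eq_single_of_mem (0 : Fin n → ZMod 2) ((hCF 0).mpr C.zero_mem)]
      · have h0 : wt (0 : Fin n → ZMod 2) = 0 := by simp [wt]
        have h1 : inn (0 : Fin n → ZMod 2) v = 0 := by simp [inn]
        rw [h0, h1, chi_zero]
        push_cast
        simp only [sub_zero]
        ring
      · intro x hx hxne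
        have hxC : x ∈ C := (hCF x).mp hx
        have hwtmem : wt x ∈ W := (hWmem _).mpr ⟨x, hxC, hxne, rfl⟩
        rw [Finset.prod_eq_zero hwtmem (by simp), zero_mul, zero_mul]
    rw [way1] at way2
    have hcard : (CF.card : ℚ) ≠ 0 := by
      have : (0 : Fin n → ZMod 2) ∈ CF := (hCF 0).mpr C.zero_mem
      have hpos : 0 < CF.card := Finset.card_pos.mpr ⟨0, this⟩
      exact Nat.cast_ne_zero.mpr hpos.ne'
    have hprod : (∏ w ∈ W, (w : ℚ)) ≠ 0 := by
      apply Finset.prod_ne_zero_iff.mpr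
      intro w hwW
      obtain ⟨c, hcC, hcne, rfl⟩ := (hWmem w).mp hwW
      have : wt c ≠ 0 := fun h => hcne ((wt_eq_zero_iff c).mp h)
      exact_mod_cast this
    exact absurd way2 (mul_ne_zero hcard hprod)
  exact Nat.sInf_le key
end
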